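/- Products and joins. Let X be an essential CAT(0) cube complex with no infinite collection of pairwise-crossing hyperplanes. (i) If there exist unbounded convex subcomplexes X_1 and X_2 with X ≅ X_1 × X_2, then there exist disjoint nonempty subcomplexes A_1, A_2 of ∂X such that ∂X ≅ A_1 ⋆ A_2, the simplicial join. (ii) If moreover X is fully visible and there exist disjoint nonempty subcomplexes A_1, A_2 of ∂X with ∂X ≅ A_1 ⋆ A_2, then there exist unbounded convex subcomplexes X_1, X_2 with X ≅ X_1 × X_2. -/

import Mathlib

/-!
Combinatorial model of a CAT(0) cube complex via Sageev duality.

`V` is the set of 0-cubes, `H` the set of hyperplanes, and `side h x : Bool`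
records which halfspace of the hyperplane `h` contains the 0-cube `x`.
The axioms say exactly that `V` is the set of consistent orientations of the
hyperplanes, each differing from a fixed one on finitely many hyperplanes;
this is precisely the combinatorial data of (the 0-skeleton of) a CAT(0) cube
complex, together with its hyperplane structure.
-/
structure CCC where
  V : Type
  H : Type
  side : H → V → Bool
  nonempty_V : Nonempty V
  vertex_ext : ∀ x y : V, (∀ h, side h x = side h y) → x = y
  sep_finite : ∀ x y : V, {h : H | side h x ≠ side h y}.Finite
  halfspace_nonempty : ∀ h b, ∃ x, side h x = b
  hyp_inj : ∀ h h' : H, (∀ x, side h x = side h' x) → h = h'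
  hyp_inj' : ∀ h h' : H, (∀ x, side h x = !(side h' x)) → h = h'
  realize : ∀ (o : H → Bool) (x : V),
    (∀ h h', ∃ y, side h y = o h ∧ side h' y = o h') →
    {h : H | o h ≠ side h x}.Finite →
    ∃ y, ∀ h, side h y = o h

namespace CCC

variable (X : CCC)

/-- The combinatorial (1-skeleton) distance between 0-cubes: the number of
separating hyperplanes. -/
noncomputable def dist (x y : X.V) : ℕ := (X.sep_finite x y).toFinset.card

/-- Two 0-cubes are adjacent (joined by a 1-cube) iff exactly one hyperplane
separates them. -/
def Adj (x y : X.V) : Prop :=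
  ∃ h, X.side h x ≠ X.side h y ∧ ∀ h', X.side h' x ≠ X.side h' y → h' = h

/-- Two hyperplanes cross iff all four quarter-spaces are nonempty. -/
def Crosses (h h' : X.H) : Prop :=
  ∀ b b' : Bool, ∃ x, X.side h x = b ∧ X.side h' x = b'

/-- The hyperplane `h'` lies in the halfspace `b` of the hyperplane `h`. -/
def InHalf (h' h : X.H) (b : Bool) : Prop :=
  h' ≠ h ∧ ∃ c : Bool, ∀ x, X.side h x = !b → X.side h' x = c

/-- `h` separates the hyperplanes `h₁` and `h₂`. -/
def SepH (h h₁ h₂ : X.H) : Prop :=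
  ∃ b : Bool, X.InHalf h₁ h b ∧ X.InHalf h₂ h (!b)

/-- Two distinct hyperplanes contact iff no third hyperplane separates them. -/
def Contact (h h' : X.H) : Prop := h ≠ h' ∧ ¬ ∃ h'', X.SepH h'' h h'

/-- A facing triple: three distinct hyperplanes, each having a halfspace
containing the other two. -/
def FacingTriple (h₁ h₂ h₃ : X.H) : Prop :=
  h₁ ≠ h₂ ∧ h₁ ≠ h₃ ∧ h₂ ≠ h₃ ∧
  ∃ b₁ b₂ b₃ : Bool,
    X.InHalf h₂ h₁ b₁ ∧ X.InHalf h₃ h₁ b₁ ∧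
    X.InHalf h₁ h₂ b₂ ∧ X.InHalf h₃ h₂ b₂ ∧
    X.InHalf h₁ h₃ b₃ ∧ X.InHalf h₂ h₃ b₃

/-- A set of hyperplanes is inseparable if every hyperplane separating two of
its members belongs to it. -/
def Inseparable (U : Set X.H) : Prop :=
  ∀ u ∈ U, ∀ u' ∈ U, ∀ h, X.SepH h u u' → h ∈ U

/-- A set of hyperplanes is unidirectional if each member has a halfspace
containing only finitely many members. -/
def Unidirectional (U : Set X.H) : Prop :=
  ∀ u ∈ U, ∃ b : Bool, {h | h ∈ U ∧ X.InHalf h u b}.Finite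

def NoFacingTriple (U : Set X.H) : Prop :=
  ∀ h₁ ∈ U, ∀ h₂ ∈ U, ∀ h₃ ∈ U, ¬ X.FacingTriple h₁ h₂ h₃

/-- A unidirectional boundary set (UBS). -/
def IsUBS (U : Set X.H) : Prop :=
  U.Infinite ∧ X.Inseparable U ∧ X.Unidirectional U ∧ X.NoFacingTriple U

/-- Almost-equivalence: finite symmetric difference. -/
def AlmostEq (U U' : Set X.H) : Prop := (symmDiff U U').Finite

/-- A minimal UBS. -/
def MinUBS (U : Set X.H) : Prop :=
  X.IsUBS U ∧ ∀ U' ⊆ U, X.IsUBS U' → X.AlmostEq U U'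

/-- The simplex (= almost-equivalence class of UBSs) represented by `U` is a
face of the simplex represented by `V`. -/
def FaceOf (U V : Set X.H) : Prop :=
  ∃ U' V', X.IsUBS U' ∧ X.IsUBS V' ∧ X.AlmostEq U U' ∧ X.AlmostEq V V' ∧ U' ⊆ V'

/-- `U` decomposes, up to almost-equivalence, into `k` pairwise disjoint
minimal UBSs; i.e. the class of `U` is a `(k-1)`-simplex of `∂X`. -/
def HasDim (U : Set X.H) (k : ℕ) : Prop :=
  ∃ 𝒰 : Fin k → Set X.H, (∀ i, X.MinUBS (𝒰 i)) ∧
    (∀ i j, i ≠ j → Disjoint (𝒰 i) (𝒰 j)) ∧ X.AlmostEq U (⋃ i, 𝒰 i)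

/-- No infinite family of pairwise-crossing hyperplanes. -/
def NoInfiniteCrossing : Prop :=
  ∀ S : Set X.H, (∀ h ∈ S, ∀ h' ∈ S, h ≠ h' → X.Crosses h h') → S.Finite

def LocallyFinite : Prop := ∀ x : X.V, {y | X.Adj x y}.Finite

/-- A combinatorial geodesic ray (parameterized by its vertices). -/
def IsGeodesicRay (γ : ℕ → X.V) : Prop :=
  ∀ m n : ℕ, m ≤ n → X.dist (γ m) (γ n) = n - m

/-- A bi-infinite combinatorial geodesic. -/
def IsGeodesicLine (α : ℤ → X.V) : Prop :=
  ∀ m n : ℤ, m ≤ n → (X.dist (α m) (α n) : ℤ) = n - m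

/-- A combinatorial geodesic segment of length `n`. -/
def IsGeodSeg (c : ℕ → X.V) (n : ℕ) : Prop :=
  ∀ i j : ℕ, i ≤ j → j ≤ n → X.dist (c i) (c j) = j - i

/-- The set of hyperplanes crossing (dual to the 1-cubes of) the path `γ`. -/
def WSet (γ : ℕ → X.V) : Set X.H :=
  {h | ∃ n : ℕ, X.side h (γ n) ≠ X.side h (γ (n+1))}

/-- The 0-cubes of the carrier `N(h)` of the hyperplane `h`. -/
def carrier (h : X.H) : Set X.V :=
  {x | ∃ y, X.Adj x y ∧ X.side h x ≠ X.side h y}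

/-- An essential hyperplane: each halfspace contains 0-cubes arbitrarily far
from the carrier. -/
def EssentialHyp (h : X.H) : Prop :=
  ∀ b : Bool, ∀ n : ℕ, ∃ x, X.side h x = b ∧ ∀ y ∈ X.carrier h, n ≤ X.dist x y

/-- Combinatorial convexity of a set of 0-cubes (the 0-skeleton of a convex
subcomplex). -/
def IsConvexSet (S : Set X.V) : Prop :=
  ∀ x ∈ S, ∀ y ∈ S, ∀ z, X.dist x z + X.dist z y = X.dist x y → z ∈ S

/-- `x` and `y` are joined by a combinatorial path avoiding `S`. -/
def ReachAvoid (S : Set X.V) (x y : X.V) : Prop :=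
  ∃ (n : ℕ) (c : ℕ → X.V), c 0 = x ∧ c n = y ∧
    (∀ i < n, X.Adj (c i) (c (i+1))) ∧ ∀ i ≤ n, c i ∉ S

/-- No compact (finite) convex subcomplex disconnects `X`. -/
def CompactlyIndecomposable : Prop :=
  ∀ K : Set X.V, K.Finite → X.IsConvexSet K →
    ∀ x y : X.V, x ∉ K → y ∉ K → X.ReachAvoid K x y

/-- `γ` bounds an eighth-flat: some eighth-flat (the subcomplex of the standard
tiling of `[0,∞)²` below the graph of an unbounded nondecreasing function)
embeds isometrically and cubically in `X` with image containing `γ`. -/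
def BoundsEighthFlat (γ : ℕ → X.V) : Prop :=
  ∃ g : ℕ → ℕ, Monotone g ∧ (∀ N : ℕ, ∃ m, N ≤ g m) ∧
    ∃ e : {p : ℕ × ℕ // p.2 ≤ g p.1} → X.V,
      (∀ p q, X.dist (e p) (e q) = Nat.dist p.1.1 q.1.1 + Nat.dist p.1.2 q.1.2) ∧
      ∀ n : ℕ, ∃ p, e p = γ n

/-- An edge-chain in the contact graph. -/
def CChain (c : ℕ → X.H) (n : ℕ) : Prop := ∀ i < n, X.Contact (c i) (c (i+1))

/-- Distance in the contact graph `C(X)` (`⊤` if there is no path). -/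
noncomputable def cdist (h h' : X.H) : ℕ∞ :=
  sInf {e : ℕ∞ | ∃ (n : ℕ) (c : ℕ → X.H), c 0 = h ∧ c n = h' ∧ X.CChain c n ∧ e = n}

/-- An edge-chain in the crossing graph. -/
def XChain (c : ℕ → X.H) (n : ℕ) : Prop := ∀ i < n, X.Crosses (c i) (c (i+1))

/-- Distance in the crossing graph `Δ(X)`. -/
noncomputable def xdist (h h' : X.H) : ℕ∞ :=
  sInf {e : ℕ∞ | ∃ (n : ℕ) (c : ℕ → X.H), c 0 = h ∧ c n = h' ∧ X.XChain c n ∧ e = n}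

/-- Distance in the full subgraph `Λ(γ)` of the contact graph spanned by the
hyperplanes crossing `γ`. -/
noncomputable def ldist (γ : ℕ → X.V) (h h' : X.H) : ℕ∞ :=
  sInf {e : ℕ∞ | ∃ (n : ℕ) (c : ℕ → X.H), c 0 = h ∧ c n = h' ∧
    (∀ i ≤ n, c i ∈ X.WSet γ) ∧ X.CChain c n ∧ e = n}

/-- Two 0-simplices of `∂X` (represented by minimal UBSs) are adjacent in the
1-skeleton of `∂X`. -/
def BAdj (U V : Set X.H) : Prop :=
  X.MinUBS U ∧ X.MinUBS V ∧ ¬ X.AlmostEq U V ∧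
    ∃ W, X.IsUBS W ∧ X.FaceOf U W ∧ X.FaceOf V W

/-- Distance in the 1-skeleton of the simplicial boundary `∂X`, between the
0-simplices represented by the minimal UBSs `U` and `V`. -/
noncomputable def bdist (U V : Set X.H) : ℕ∞ :=
  sInf {e : ℕ∞ | ∃ (n : ℕ) (c : ℕ → Set X.H),
    X.AlmostEq (c 0) U ∧ X.AlmostEq (c n) V ∧ (∀ i ≤ n, X.MinUBS (c i)) ∧
    (∀ i < n, X.BAdj (c i) (c (i+1)) ∨ X.AlmostEq (c i) (c (i+1))) ∧ e = n}

/-- Diameter of the contact graph. -/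
noncomputable def cdiam : ℕ∞ := ⨆ (h : X.H) (h' : X.H), X.cdist h h'

/-- Diameter of the crossing graph. -/
noncomputable def xdiam : ℕ∞ := ⨆ (h : X.H) (h' : X.H), X.xdist h h'

/-- Diameter of the 1-skeleton of the simplicial boundary. -/
noncomputable def bdiam : ℕ∞ :=
  ⨆ (U : Set X.H) (V : Set X.H) (_ : X.MinUBS U) (_ : X.MinUBS V), X.bdist U V

/-- A consistent orientation of the hyperplanes: any two chosen halfspaces
intersect. -/
def Consistent (χ : X.H → Bool) : Prop :=
  ∀ h h', ∃ x, X.side h x = χ h ∧ X.side h' x = χ h'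

/-- The halfspace `b` of `h`, as a set of 0-cubes. -/
def Hs (h : X.H) (b : Bool) : Set X.V := {x | X.side h x = b}

/-- Every simplex of `∂X` is visible, i.e. represented by the set of
hyperplanes crossing some combinatorial geodesic ray. -/
def FullyVisible : Prop :=
  ∀ V, X.IsUBS V → ∃ γ : ℕ → X.V, X.IsGeodesicRay γ ∧ X.AlmostEq (X.WSet γ) V

/-- The halfspace `b` of `h` is shallow: it lies within uniformly bounded
distance of the carrier of `h`. -/
def ShallowHalf (h : X.H) (b : Bool) : Prop :=
  ∃ R : ℕ, ∀ x, X.side h x = b → ∃ y ∈ X.carrier h, X.dist x y ≤ R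

/-- An `r`-avoiding combinatorial path (with respect to the basepoint `x₀`)
of length `n` from `a` to `b`. -/
def AvoidPathLen (x₀ : X.V) (r : ℕ) (a b : X.V) (n : ℕ) : Prop :=
  ∃ c : ℕ → X.V, c 0 = a ∧ c n = b ∧
    (∀ i < n, X.Adj (c i) (c (i+1))) ∧ ∀ i ≤ n, r ≤ X.dist (c i) x₀

/-- Combinatorial geodesic completeness: for every (finite) maximal family of
pairwise-crossing hyperplanes and every choice of halfspaces, the intersection
of the chosen halfspaces contains 0-cubes arbitrarily far from the
intersection of the carriers. -/
def CombGeodComplete : Prop :=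
  ∀ (n : ℕ) (W : Fin n → X.H), Function.Injective W →
    (∀ i j, i ≠ j → X.Crosses (W i) (W j)) →
    (∀ h, ¬ ∀ i, X.Crosses h (W i)) →
    ∀ χ : Fin n → Bool, ∀ R : ℕ,
      ∃ x, (∀ i, X.side (W i) x = χ i) ∧
        ∀ y, (∀ i, y ∈ X.carrier (W i)) → R ≤ X.dist x y

/-- `X` decomposes as a product of two unbounded convex subcomplexes:
equivalently, the hyperplanes split into two parts, each member of one part
crossing each member of the other, both factors being unbounded. -/
def ProductDecomp : Prop :=
  ∃ H₁ H₂ : Set X.H, Disjoint H₁ H₂ ∧ H₁ ∪ H₂ = Set.univ ∧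
    (∀ h₁ ∈ H₁, ∀ h₂ ∈ H₂, X.Crosses h₁ h₂) ∧
    (∀ n : ℕ, ∃ x y : X.V, n ≤ ({h | X.side h x ≠ X.side h y} ∩ H₁).ncard) ∧
    (∀ n : ℕ, ∃ x y : X.V, n ≤ ({h | X.side h x ≠ X.side h y} ∩ H₂).ncard)

/-- `∂X` decomposes as the simplicial join of two disjoint nonempty
subcomplexes: the 0-simplices split into two nonempty parts, any 0-simplex of
one part spanning a 1-simplex with any 0-simplex of the other. -/
def JoinDecomp : Prop :=
  ∃ 𝒜₁ 𝒜₂ : Set (Set X.H),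
    (∀ U ∈ 𝒜₁, X.MinUBS U) ∧ (∀ U ∈ 𝒜₂, X.MinUBS U) ∧
    𝒜₁.Nonempty ∧ 𝒜₂.Nonempty ∧
    (∀ U U', U ∈ 𝒜₁ → X.MinUBS U' → X.AlmostEq U U' → U' ∈ 𝒜₁) ∧
    (∀ U U', U ∈ 𝒜₂ → X.MinUBS U' → X.AlmostEq U U' → U' ∈ 𝒜₂) ∧
    (∀ U, X.MinUBS U → U ∈ 𝒜₁ ∨ U ∈ 𝒜₂) ∧
    (∀ U ∈ 𝒜₁, ∀ V ∈ 𝒜₂, ¬ X.AlmostEq U V) ∧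
    (∀ U ∈ 𝒜₁, ∀ V ∈ 𝒜₂, ∃ W, X.IsUBS W ∧ X.FaceOf U W ∧ X.FaceOf V W)

/-! Relative versions of the hyperplane notions, for a (convex) subcomplex
with 0-cube set `S`; the hyperplanes of the subcomplex are the hyperplanes of
`X` crossing it. -/

/-- `h` crosses the subcomplex with 0-cubes `S`. -/
def CrossesSet (S : Set X.V) (h : X.H) : Prop :=
  ∃ x ∈ S, ∃ y ∈ S, X.side h x ≠ X.side h y

def InHalfOn (S : Set X.V) (h' h : X.H) (b : Bool) : Prop :=
  h' ≠ h ∧ ∃ c : Bool, ∀ x ∈ S, X.side h x = !b → X.side h' x = c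

def SepHOn (S : Set X.V) (h h₁ h₂ : X.H) : Prop :=
  X.CrossesSet S h ∧ ∃ b : Bool, X.InHalfOn S h₁ h b ∧ X.InHalfOn S h₂ h (!b)

def InseparableOn (S : Set X.V) (U : Set X.H) : Prop :=
  ∀ u ∈ U, ∀ u' ∈ U, ∀ h, X.SepHOn S h u u' → h ∈ U

def UnidirectionalOn (S : Set X.V) (U : Set X.H) : Prop :=
  ∀ u ∈ U, ∃ b : Bool, {h | h ∈ U ∧ X.InHalfOn S h u b}.Finite

def NoFacingTripleOn (S : Set X.V) (U : Set X.H) : Prop :=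
  ∀ h₁ ∈ U, ∀ h₂ ∈ U, ∀ h₃ ∈ U, ¬ (h₁ ≠ h₂ ∧ h₁ ≠ h₃ ∧ h₂ ≠ h₃ ∧
    ∃ b₁ b₂ b₃ : Bool,
      X.InHalfOn S h₂ h₁ b₁ ∧ X.InHalfOn S h₃ h₁ b₁ ∧
      X.InHalfOn S h₁ h₂ b₂ ∧ X.InHalfOn S h₃ h₂ b₂ ∧
      X.InHalfOn S h₁ h₃ b₃ ∧ X.InHalfOn S h₂ h₃ b₃)

/-- A UBS of the subcomplex with 0-cube set `S`. -/
def IsUBSOn (S : Set X.V) (U : Set X.H) : Prop :=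
  (∀ h ∈ U, X.CrossesSet S h) ∧ U.Infinite ∧ X.InseparableOn S U ∧
    X.UnidirectionalOn S U ∧ X.NoFacingTripleOn S U

def MinUBSOn (S : Set X.V) (U : Set X.H) : Prop :=
  X.IsUBSOn S U ∧ ∀ U' ⊆ U, X.IsUBSOn S U' → X.AlmostEq U U'

def FaceOfOn (S : Set X.V) (U V : Set X.H) : Prop :=
  ∃ U' V', X.IsUBSOn S U' ∧ X.IsUBSOn S V' ∧ X.AlmostEq U U' ∧ X.AlmostEq V V' ∧ U' ⊆ V'

def HasDimOn (S : Set X.V) (U : Set X.H) (k : ℕ) : Prop :=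
  ∃ 𝒰 : Fin k → Set X.H, (∀ i, X.MinUBSOn S (𝒰 i)) ∧
    (∀ i j, i ≠ j → Disjoint (𝒰 i) (𝒰 j)) ∧ X.AlmostEq U (⋃ i, 𝒰 i)

end CCC

/-!
Orient each hyperplane `g` by its halfspace `awayHs x₀ g` not containing a base point `x₀`; two
hyperplanes then cross, are nested, or face each other. Since there is no infinite family of
pairwise crossing hyperplanes and a UBS has no facing triple, every infinite subset of a UBS
contains a strictly descending sequence of such halfspaces, and the hyperplanes pinched between two
of its terms form a UBS, its `chainHull`. If a chain hull is not minimal, one of its sub-UBSs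
crosses a fixed hyperplane of the hull; iterating this would produce infinitely many pairwise
crossing hyperplanes, so every UBS contains a minimal one. By essentiality every halfspace contains
such a sequence, hence a minimal UBS.

A product decomposition is a set `K` of hyperplanes crossing every hyperplane outside `K`. The
minimal UBSs almost contained in `K` and those almost contained in its complement are the two sides
of a join, because the union of UBSs taken from the two factors is again a UBS. Conversely, given a
join, put `h` in `K` when a minimal UBS of the first side lies in a halfspace of `h`. A UBS spanned
by two minimal UBSs lying in disjoint halfspaces would have a hyperplane with infinitely many of its
hyperplanes on either side, so no `h` also carries a minimal UBS of the second side. As nested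
hyperplanes carry the same minimal UBSs, every hyperplane of `K` crosses every hyperplane outside.
-/

lemma exists_seq_of_forall_exists {α : Type*} {P : α → Prop} {r : α → α → Prop}
    (h : ∀ a, P a → ∃ b, P b ∧ r a b) {a : α} (ha : P a) :
    ∃ f : ℕ → α, f 0 = a ∧ ∀ n, P (f n) ∧ r (f n) (f (n + 1)) := by
  choose! g hgP hgr using h
  have hP : ∀ n, P (g^[n] a) := fun n => by
    induction n with
    | zero => exact ha
    | succ n ih => rw [Function.iterate_succ_apply']; exact hgP _ ih
  refine ⟨fun n => g^[n] a, rfl, fun n => ⟨hP n, ?_⟩⟩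
  simp only [Function.iterate_succ_apply']
  exact hgr _ (hP n)

namespace CCC

variable {X : CCC}

lemma Hs_compl (h : X.H) (b : Bool) : (X.Hs h b)ᶜ = X.Hs h (!b) := by
  ext x; simp [Hs, Bool.eq_not_iff]

lemma Hs_nonempty (h : X.H) (b : Bool) : (X.Hs h b).Nonempty := X.halfspace_nonempty h b

lemma disjoint_Hs_not (h : X.H) (b : Bool) : Disjoint (X.Hs h b) (X.Hs h (!b)) := by
  rw [← Hs_compl]; exact disjoint_compl_right

lemma eq_of_Hs_eq {h h' : X.H} {b b' : Bool} (e : X.Hs h b = X.Hs h' b') : h = h' := by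
  have key : ∀ x, X.side h x = b ↔ X.side h' x = b' := fun x => Set.ext_iff.1 e x
  rcases Bool.eq_or_eq_not b' b with rfl | rfl
  · exact X.hyp_inj h h' fun x => by
      cases hx : X.side h x <;> cases hx' : X.side h' x <;> cases b' <;> simp_all
  · exact X.hyp_inj' h h' fun x => by
      cases hx : X.side h x <;> cases hx' : X.side h' x <;> cases b <;> simp_all

lemma Crosses.symm {h h' : X.H} (hc : X.Crosses h h') : X.Crosses h' h := fun b b' =>
  (hc b' b).imp fun _ hx => hx.symm

lemma Crosses.ne {h h' : X.H} (hc : X.Crosses h h') : h ≠ h' := by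
  rintro rfl
  obtain ⟨x, hx, hx'⟩ := hc true false
  simp [hx] at hx'

lemma not_crosses_of_Hs_subset {h h' : X.H} {b b' : Bool} (hsub : X.Hs h b ⊆ X.Hs h' b') :
    ¬ X.Crosses h h' := fun hc => by
  obtain ⟨x, hx, hx'⟩ := hc b (!b')
  have : X.side h' x = b' := hsub hx
  simp [this] at hx'

lemma exists_Hs_subset_of_not_crosses {h h' : X.H} (hnc : ¬ X.Crosses h h') :
    ∃ b b', X.Hs h b ⊆ X.Hs h' b' := by
  simp only [Crosses, not_forall, not_exists, not_and] at hnc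
  obtain ⟨b, b', hb⟩ := hnc
  exact ⟨b, !b', fun x hx => Bool.eq_not_iff.2 (hb x hx)⟩

lemma inHalf_iff {g h : X.H} {b : Bool} :
    X.InHalf g h b ↔ g ≠ h ∧ ∃ c, X.Hs g c ⊆ X.Hs h b := by
  refine and_congr_right fun _ => ⟨fun ⟨c, hc⟩ => ⟨!c, ?_⟩, fun ⟨c, hc⟩ => ⟨!c, ?_⟩⟩
  · rw [← Set.compl_subset_compl, Hs_compl, Hs_compl, Bool.not_not]
    exact fun x hx => hc x hx
  · have hc' := Set.compl_subset_compl.2 hc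
    rw [Hs_compl, Hs_compl] at hc'
    exact fun x hx => hc' hx

lemma not_inHalf_of_crosses {g h : X.H} {b : Bool} (hc : X.Crosses h g) : ¬ X.InHalf g h b :=
  fun hin => by
    obtain ⟨-, c, hsub⟩ := inHalf_iff.1 hin
    exact not_crosses_of_Hs_subset hsub hc.symm

lemma not_sepH_of_crosses {g u v : X.H} (hc : X.Crosses u v) : ¬ X.SepH g u v := by
  rintro ⟨b, hu, hv⟩
  obtain ⟨-, c, hcu⟩ := inHalf_iff.1 hu
  obtain ⟨-, c', hcv⟩ := inHalf_iff.1 hv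
  obtain ⟨x, hx, hx'⟩ := hc c c'
  have h1 : X.side g x = b := hcu hx
  have h2 : X.side g x = !b := hcv hx'
  simp [h1] at h2

lemma sepH_of_Hs_subset_of_subset {g u v : X.H} {bu bg bv : Bool}
    (hu : X.Hs u bu ⊆ X.Hs g bg) (hv : X.Hs g bg ⊆ X.Hs v bv) (hug : u ≠ g) (hvg : v ≠ g) :
    X.SepH g u v := by
  refine ⟨bg, inHalf_iff.2 ⟨hug, bu, hu⟩, inHalf_iff.2 ⟨hvg, !bv, ?_⟩⟩
  rw [← Hs_compl, ← Hs_compl]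
  exact Set.compl_subset_compl.2 hv

lemma FacingTriple.not_crosses {h₁ h₂ h₃ : X.H} (hf : X.FacingTriple h₁ h₂ h₃) :
    ¬ X.Crosses h₁ h₂ ∧ ¬ X.Crosses h₁ h₃ ∧ ¬ X.Crosses h₂ h₃ := by
  obtain ⟨-, -, -, _, _, _, h21, h31, -, h32, -, -⟩ := hf
  exact ⟨fun hc => not_inHalf_of_crosses hc h21, fun hc => not_inHalf_of_crosses hc h31,
    fun hc => not_inHalf_of_crosses hc h32⟩

lemma NoFacingTriple.mono {S T : Set X.H} (hT : X.NoFacingTriple T) (hST : S ⊆ T) :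
    X.NoFacingTriple S :=
  fun _ h₁ _ h₂ _ h₃ => hT _ (hST h₁) _ (hST h₂) _ (hST h₃)

lemma Unidirectional.mono {S T : Set X.H} (hT : X.Unidirectional T) (hST : S ⊆ T) :
    X.Unidirectional S := fun u hu =>
  (hT u (hST hu)).imp fun _ hfin => hfin.subset fun _ hg => ⟨hST hg.1, hg.2⟩

variable (X) in
def awayHs (x₀ : X.V) (g : X.H) : Set X.V := X.Hs g (!X.side g x₀)

section awayHs

variable {x₀ : X.V} {g h : X.H}

lemma mem_awayHs {x : X.V} : x ∈ X.awayHs x₀ g ↔ X.side g x ≠ X.side g x₀ := Bool.eq_not_iff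

lemma notMem_awayHs {x : X.V} : x ∉ X.awayHs x₀ g ↔ X.side g x = X.side g x₀ := by
  rw [mem_awayHs, not_not]

lemma base_notMem_awayHs (x₀ : X.V) (g : X.H) : x₀ ∉ X.awayHs x₀ g := by
  simp [mem_awayHs]

lemma awayHs_nonempty (x₀ : X.V) (g : X.H) : (X.awayHs x₀ g).Nonempty := Hs_nonempty _ _

lemma compl_awayHs (x₀ : X.V) (g : X.H) : (X.awayHs x₀ g)ᶜ = X.Hs g (X.side g x₀) := by
  rw [awayHs, Hs_compl, Bool.not_not]

lemma Hs_eq_awayHs_or_compl (x₀ : X.V) (g : X.H) (c : Bool) :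
    X.Hs g c = X.awayHs x₀ g ∨ X.Hs g c = (X.awayHs x₀ g)ᶜ := by
  rw [compl_awayHs]
  rcases Bool.eq_or_eq_not c (X.side g x₀) with rfl | rfl
  · exact Or.inr rfl
  · exact Or.inl rfl

lemma awayHs_eq_of_base_notMem {c : Bool} (h₀ : x₀ ∉ X.Hs g c) : X.awayHs x₀ g = X.Hs g c := by
  rcases Hs_eq_awayHs_or_compl x₀ g c with e | e
  · exact e.symm
  · rw [e, Set.notMem_compl_iff] at h₀
    exact absurd h₀ (base_notMem_awayHs x₀ g)

lemma awayHs_injective (x₀ : X.V) : Function.Injective (X.awayHs x₀) :=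
  fun _ _ e => eq_of_Hs_eq e

lemma ne_of_disjoint_awayHs (hd : Disjoint (X.awayHs x₀ g) (X.awayHs x₀ h)) : g ≠ h := by
  rintro rfl
  exact (awayHs_nonempty x₀ g).ne_empty (disjoint_self.1 hd)

lemma finite_setOf_subset_awayHs (x₀ : X.V) {P : Set X.V} (hP : P.Nonempty) :
    {g | P ⊆ X.awayHs x₀ g}.Finite := by
  obtain ⟨z, hz⟩ := hP
  exact (X.sep_finite z x₀).subset fun g hg => mem_awayHs.1 (hg hz)

lemma crosses_iff_awayHs (x₀ : X.V) :
    X.Crosses g h ↔ (X.awayHs x₀ g ∩ X.awayHs x₀ h).Nonempty ∧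
      ¬ X.awayHs x₀ g ⊆ X.awayHs x₀ h ∧ ¬ X.awayHs x₀ h ⊆ X.awayHs x₀ g := by
  simp only [Set.not_subset]
  refine ⟨fun hc => ⟨hc _ _, ?_, ?_⟩, fun ⟨hgh, ⟨x, hx, hx'⟩, ⟨y, hy, hy'⟩⟩ b b' => ?_⟩
  · obtain ⟨x, hx, hx'⟩ := hc (!X.side g x₀) (X.side h x₀)
    exact ⟨x, hx, notMem_awayHs.2 hx'⟩
  · obtain ⟨x, hx, hx'⟩ := hc (X.side g x₀) (!X.side h x₀)
    exact ⟨x, hx', notMem_awayHs.2 hx⟩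
  rcases Bool.eq_or_eq_not b (X.side g x₀) with rfl | rfl <;>
    rcases Bool.eq_or_eq_not b' (X.side h x₀) with rfl | rfl
  · exact ⟨x₀, rfl, rfl⟩
  · exact ⟨y, notMem_awayHs.1 hy', hy⟩
  · exact ⟨x, hx, notMem_awayHs.1 hx'⟩
  · exact hgh

lemma disjoint_or_subset_of_not_crosses (x₀ : X.V) (hnc : ¬ X.Crosses g h) :
    Disjoint (X.awayHs x₀ g) (X.awayHs x₀ h) ∨
      X.awayHs x₀ g ⊆ X.awayHs x₀ h ∨ X.awayHs x₀ h ⊆ X.awayHs x₀ g := by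
  rw [crosses_iff_awayHs x₀] at hnc
  rw [Set.disjoint_iff_inter_eq_empty, ← Set.not_nonempty_iff_eq_empty]
  tauto

lemma crosses_of_awayHs_subset_of_subset {u v : X.H} (hu : X.awayHs x₀ u ⊆ X.awayHs x₀ g)
    (hv : X.awayHs x₀ g ⊆ X.awayHs x₀ v) (hue : X.Crosses u h) (hve : X.Crosses v h) :
    X.Crosses g h := by
  rw [crosses_iff_awayHs x₀] at hue hve ⊢
  exact ⟨hue.1.mono (Set.inter_subset_inter_left _ hu), fun hs => hue.2.1 (hu.trans hs),
    fun hs => hve.2.2 (hs.trans hv)⟩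

lemma inHalf_of_disjoint_awayHs (hd : Disjoint (X.awayHs x₀ g) (X.awayHs x₀ h)) :
    X.InHalf g h (X.side h x₀) :=
  inHalf_iff.2 ⟨ne_of_disjoint_awayHs hd, !X.side g x₀, by
    rw [← compl_awayHs x₀ h]; exact hd.subset_compl_right⟩

lemma inHalf_of_awayHs_ssubset (hs : X.awayHs x₀ g ⊂ X.awayHs x₀ h) :
    X.InHalf g h (!X.side h x₀) :=
  inHalf_iff.2 ⟨fun e => hs.ne (congrArg _ e), _, hs.subset⟩

lemma awayHs_subset_of_inHalf_base_side (hin : X.InHalf g h (X.side h x₀))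
    (hne : (X.awayHs x₀ g ∩ X.awayHs x₀ h).Nonempty) : X.awayHs x₀ h ⊆ X.awayHs x₀ g := by
  obtain ⟨-, c, hc⟩ := inHalf_iff.1 hin
  rw [← compl_awayHs] at hc
  rcases Hs_eq_awayHs_or_compl x₀ g c with e | e <;> rw [e] at hc
  · exact absurd (Set.subset_compl_iff_disjoint_right.1 hc)
      (Set.not_disjoint_iff_nonempty_inter.2 hne)
  · exact Set.compl_subset_compl.1 hc

lemma awayHs_subset_of_inHalf_away_side (hin : X.InHalf g h (!X.side h x₀)) :
    X.awayHs x₀ g ⊆ X.awayHs x₀ h := by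
  obtain ⟨-, c, hc⟩ := inHalf_iff.1 hin
  rwa [awayHs_eq_of_base_notMem fun h₀ => base_notMem_awayHs x₀ h (hc h₀)]

lemma facingTriple_of_pairwise_disjoint (x₀ : X.V) {h₁ h₂ h₃ : X.H}
    (d₁₂ : Disjoint (X.awayHs x₀ h₁) (X.awayHs x₀ h₂))
    (d₁₃ : Disjoint (X.awayHs x₀ h₁) (X.awayHs x₀ h₃))
    (d₂₃ : Disjoint (X.awayHs x₀ h₂) (X.awayHs x₀ h₃)) : X.FacingTriple h₁ h₂ h₃ :=
  ⟨ne_of_disjoint_awayHs d₁₂, ne_of_disjoint_awayHs d₁₃, ne_of_disjoint_awayHs d₂₃, _, _, _,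
    inHalf_of_disjoint_awayHs d₁₂.symm, inHalf_of_disjoint_awayHs d₁₃.symm,
    inHalf_of_disjoint_awayHs d₁₂, inHalf_of_disjoint_awayHs d₂₃.symm,
    inHalf_of_disjoint_awayHs d₁₃, inHalf_of_disjoint_awayHs d₂₃⟩

end awayHs

lemma NoInfiniteCrossing.false_of_crosses_seq (hXc : X.NoInfiniteCrossing) {e : ℕ → X.H}
    (he : ∀ m n, m < n → X.Crosses (e m) (e n)) : False := by
  have he' : ∀ m n, m ≠ n → X.Crosses (e m) (e n) := fun m n hmn =>
    hmn.lt_or_gt.elim (he m n) fun h => (he n m h).symm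
  refine Set.infinite_range_of_injective (f := e) (fun m n e_eq => ?_) (hXc _ ?_)
  · by_contra hmn
    exact (he' m n hmn).ne e_eq
  · rintro _ ⟨m, rfl⟩ _ ⟨n, rfl⟩ hne
    exact he' m n fun h => hne (congrArg e h)

lemma NoInfiniteCrossing.finite_of_finite_not_crosses (hXc : X.NoInfiniteCrossing)
    {S : Set X.H} (hS : ∀ a ∈ S, {g ∈ S | ¬ X.Crosses a g}.Finite) : S.Finite := by
  by_contra hinf
  obtain ⟨e, -, he⟩ := exists_seq_of_forall_finset_exists (· ∈ S) X.Crosses fun s hs => by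
    have hfin : (⋃ a ∈ s, {g ∈ S | ¬ X.Crosses a g}).Finite :=
      s.finite_toSet.biUnion fun a ha => hS a (hs a ha)
    obtain ⟨y, hyS, hy⟩ := (Set.Infinite.sdiff hinf hfin).nonempty
    exact ⟨y, hyS, fun a ha => by_contra fun hc => hy (Set.mem_biUnion ha ⟨hyS, hc⟩)⟩
  exact hXc.false_of_crosses_seq he

lemma exists_mem_infinite_below (hXc : X.NoInfiniteCrossing) (x₀ : X.V) {S : Set X.H}
    (hS : S.Infinite) (hSf : X.NoFacingTriple S) :
    ∃ a ∈ S, {g ∈ S | X.awayHs x₀ g ⊂ X.awayHs x₀ a}.Infinite := by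
  by_contra! hfin
  let cmp : X.H → Set X.H := fun a =>
    {g ∈ S | X.awayHs x₀ g ⊆ X.awayHs x₀ a ∨ X.awayHs x₀ a ⊆ X.awayHs x₀ g}
  have hcmp : ∀ a ∈ S, (cmp a).Finite := fun a ha => by
    refine (((hfin a ha).union (Set.finite_singleton a)).union
      (finite_setOf_subset_awayHs x₀ (awayHs_nonempty x₀ a))).subset ?_
    rintro g ⟨hgS, hsub | hsub⟩
    · rcases hsub.eq_or_ssubset with e | hlt
      · exact Or.inl (Or.inr (awayHs_injective x₀ e))
      · exact Or.inl (Or.inl ⟨hgS, hlt⟩)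
    · exact Or.inr hsub
  have hnc : ∀ a, ∀ g ∈ S, ¬ X.Crosses a g →
      g ∈ cmp a ∨ Disjoint (X.awayHs x₀ a) (X.awayHs x₀ g) := fun a g hgS hc => by
    rcases disjoint_or_subset_of_not_crosses x₀ hc with hd | hs | hs
    · exact Or.inr hd
    · exact Or.inl ⟨hgS, Or.inr hs⟩
    · exact Or.inl ⟨hgS, Or.inl hs⟩
  -- the hyperplanes facing a fixed one pairwise cross or are nested, as `S` has no facing triple
  have hfacing : ∀ a ∈ S, {g ∈ S | Disjoint (X.awayHs x₀ a) (X.awayHs x₀ g)}.Finite := by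
    refine fun a ha =>
      hXc.finite_of_finite_not_crosses fun g ⟨hgS, hag⟩ => (hcmp g hgS).subset ?_
    rintro g' ⟨⟨hg'S, hag'⟩, hc⟩
    exact (hnc g g' hg'S hc).resolve_right fun hgg' =>
      hSf a ha g hgS g' hg'S (facingTriple_of_pairwise_disjoint x₀ hag hag' hgg')
  refine hS (hXc.finite_of_finite_not_crosses fun a ha => ?_)
  refine ((hcmp a ha).union (hfacing a ha)).subset fun g ⟨hgS, hc⟩ => ?_
  exact (hnc a g hgS hc).imp id fun hd => ⟨hgS, hd⟩

lemma exists_strictAnti_subset (hXc : X.NoInfiniteCrossing) (x₀ : X.V) {S : Set X.H}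
    (hS : S.Infinite) (hSf : X.NoFacingTriple S) :
    ∃ δ : ℕ → X.H, StrictAnti (X.awayHs x₀ ∘ δ) ∧ ∀ k, δ k ∈ S := by
  let below : X.H → Set X.H := fun a => {g ∈ S | X.awayHs x₀ g ⊂ X.awayHs x₀ a}
  obtain ⟨a, haS, ha⟩ := exists_mem_infinite_below hXc x₀ hS hSf
  obtain ⟨δ, -, hδ⟩ := exists_seq_of_forall_exists
    (P := fun a => a ∈ S ∧ (below a).Infinite) (r := fun a b => X.awayHs x₀ b ⊂ X.awayHs x₀ a)
    (fun a ⟨_, ha⟩ => by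
      obtain ⟨b, ⟨hbS, hba⟩, hb⟩ :=
        exists_mem_infinite_below hXc x₀ ha (hSf.mono fun g hg => hg.1)
      exact ⟨b, ⟨hbS, hb.mono fun g hg => ⟨hg.1.1, hg.2⟩⟩, hba⟩)
    ⟨haS, ha⟩
  exact ⟨δ, strictAnti_nat_of_succ_lt fun n => (hδ n).2, fun n => (hδ n).1.1⟩

lemma dist_self (x : X.V) : X.dist x x = 0 := by
  simp [dist]

lemma exists_Hs_subset_of_notMem_carrier {h : X.H} {x : X.V} (hx : x ∉ X.carrier h) :
    ∃ g, g ≠ h ∧ ∃ c, X.Hs g c ⊆ X.Hs h (X.side h x) := by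
  classical
  by_contra! hno
  -- otherwise flipping `h` at `x` is consistent, and realized by a neighbour of `x` across `h`
  have hflip : ∀ g, g ≠ h → ∃ y, X.side h y = !X.side h x ∧ X.side g y = X.side g x :=
    fun g hg => by
      obtain ⟨y, hy, hyh⟩ := Set.not_subset.1 (hno g hg (X.side g x))
      exact ⟨y, Bool.eq_not_iff.2 hyh, hy⟩
  let o : X.H → Bool := fun g => if g = h then !X.side h x else X.side g x
  have hcons : ∀ g g', ∃ y, X.side g y = o g ∧ X.side g' y = o g' := by
    intro g g'
    by_cases hg : g = h <;> by_cases hg' : g' = h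
    · obtain ⟨y, hy⟩ := Hs_nonempty h (!X.side h x)
      replace hy : X.side h y = !X.side h x := hy
      exact ⟨y, by simpa [o, hg] using hy, by simpa [o, hg'] using hy⟩
    · obtain ⟨y, hyh, hy⟩ := hflip g' hg'
      exact ⟨y, by simpa [o, hg] using hyh, by simpa [o, hg'] using hy⟩
    · obtain ⟨y, hyh, hy⟩ := hflip g hg
      exact ⟨y, by simpa [o, hg] using hy, by simpa [o, hg'] using hyh⟩
    · exact ⟨x, by simp [o, hg], by simp [o, hg']⟩
  obtain ⟨y, hy⟩ := X.realize o x hcons <| (Set.finite_singleton h).subset fun g hg => by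
    by_contra hgh
    exact hg (by simp [o, Set.mem_singleton_iff.not.1 hgh])
  have hyh : X.side h x ≠ X.side h y := by simp [hy, o]
  refine hx ⟨y, ⟨h, hyh, fun g hg => ?_⟩, hyh⟩
  by_contra hgh
  exact hg (by simp [hy, o, hgh])

lemma exists_awayHs_ssubset {h : X.H} (hess : X.EssentialHyp h) (x₀ : X.V) :
    ∃ g, X.awayHs x₀ g ⊂ X.awayHs x₀ h := by
  obtain ⟨x, hx, hfar⟩ := hess (!X.side h x₀) 1
  have hxc : x ∉ X.carrier h := fun hc => by simpa [dist_self] using hfar x hc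
  obtain ⟨g, hgh, c, hsub⟩ := exists_Hs_subset_of_notMem_carrier hxc
  rw [hx] at hsub
  rw [← awayHs_eq_of_base_notMem fun h₀ => base_notMem_awayHs x₀ h (hsub h₀)] at hsub
  exact ⟨g, hsub.ssubset_of_ne ((awayHs_injective x₀).ne hgh)⟩

lemma exists_strictAnti_of_essential (hess : ∀ h : X.H, X.EssentialHyp h) (x₀ : X.V)
    (h : X.H) : ∃ γ : ℕ → X.H, γ 0 = h ∧ StrictAnti (X.awayHs x₀ ∘ γ) := by
  obtain ⟨γ, hγ0, hγ⟩ := exists_seq_of_forall_exists (P := fun _ => True)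
    (r := fun a b => X.awayHs x₀ b ⊂ X.awayHs x₀ a)
    (fun a _ => (exists_awayHs_ssubset (hess a) x₀).imp fun _ hb => ⟨trivial, hb⟩) trivial
  exact ⟨γ, hγ0, strictAnti_nat_of_succ_lt fun n => (hγ n).2⟩

section coherent

variable {x₀ : X.V} {S : Set X.H}

lemma unidirectional_of_inter_awayHs_nonempty
    (hS : ∀ g ∈ S, ∀ g' ∈ S, (X.awayHs x₀ g ∩ X.awayHs x₀ g').Nonempty) :
    X.Unidirectional S := fun u hu =>
  ⟨X.side u x₀, (finite_setOf_subset_awayHs x₀ (awayHs_nonempty x₀ u)).subset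
    fun g ⟨hg, hin⟩ => awayHs_subset_of_inHalf_base_side hin (hS g hg u hu)⟩

lemma noFacingTriple_of_inter_awayHs_nonempty
    (hS : ∀ g ∈ S, ∀ g' ∈ S, (X.awayHs x₀ g ∩ X.awayHs x₀ g').Nonempty) :
    X.NoFacingTriple S := by
  rintro h₁ m₁ h₂ m₂ h₃ m₃ ⟨n₁₂, n₁₃, n₂₃, b₁, b₂, b₃, i₂₁, i₃₁, i₁₂, i₃₂, i₁₃, i₂₃⟩
  -- two of the three orientations point the same way relative to `x₀`, which is impossible
  have near : ∀ {g h}, g ∈ S → h ∈ S → g ≠ h →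
      X.InHalf g h (X.side h x₀) → ¬ X.InHalf h g (X.side g x₀) := fun hg hh hne hgh hhg =>
    hne (awayHs_injective x₀ ((awayHs_subset_of_inHalf_base_side hhg (hS _ hh _ hg)).antisymm
      (awayHs_subset_of_inHalf_base_side hgh (hS _ hg _ hh))))
  have away : ∀ {g h : X.H}, g ≠ h →
      X.InHalf g h (!X.side h x₀) → ¬ X.InHalf h g (!X.side g x₀) := fun hne hgh hhg =>
    hne (awayHs_injective x₀ ((awayHs_subset_of_inHalf_away_side hgh).antisymm
      (awayHs_subset_of_inHalf_away_side hhg)))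
  rcases Bool.eq_or_eq_not b₁ (X.side h₁ x₀) with rfl | rfl <;>
    rcases Bool.eq_or_eq_not b₂ (X.side h₂ x₀) with rfl | rfl <;>
    rcases Bool.eq_or_eq_not b₃ (X.side h₃ x₀) with rfl | rfl <;>
    first
    | exact near m₂ m₁ n₁₂.symm i₂₁ i₁₂
    | exact near m₃ m₁ n₁₃.symm i₃₁ i₁₃
    | exact near m₃ m₂ n₂₃.symm i₃₂ i₂₃
    | exact away n₁₂.symm i₂₁ i₁₂
    | exact away n₁₃.symm i₃₁ i₁₃
    | exact away n₂₃.symm i₃₂ i₂₃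

end coherent

variable (X) in
def chainHull (x₀ : X.V) (γ : ℕ → X.H) : Set X.H :=
  {g | ∃ k k', X.awayHs x₀ (γ k) ⊆ X.awayHs x₀ g ∧ X.awayHs x₀ g ⊆ X.awayHs x₀ (γ k')}

variable (X) in
def LiesIn (M : Set X.H) (P : Set X.V) : Prop := ∀ g ∈ M, ∃ c, X.Hs g c ⊆ P

lemma LiesIn.mono {M M' : Set X.H} {P P' : Set X.V} (hM : X.LiesIn M P) (hM' : M' ⊆ M)
    (hP : P ⊆ P') : X.LiesIn M' P' :=
  fun g hg => (hM g (hM' hg)).imp fun _ hc => hc.trans hP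

section chainHull

variable {x₀ : X.V} {γ : ℕ → X.H}

lemma mem_chainHull_self (k : ℕ) : γ k ∈ X.chainHull x₀ γ := ⟨k, k, subset_rfl, subset_rfl⟩

lemma chainHull_subset_of_inseparable {S : Set X.H} (hS : X.Inseparable S)
    (hγS : ∀ k, γ k ∈ S) : X.chainHull x₀ γ ⊆ S := by
  rintro g ⟨k, k', hk, hk'⟩
  by_cases e : γ k = g
  · exact e ▸ hγS k
  by_cases e' : γ k' = g
  · exact e' ▸ hγS k'
  exact hS _ (hγS k) _ (hγS k') g (sepH_of_Hs_subset_of_subset hk hk' e e')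

lemma chainHull_subset_chainHull {δ : ℕ → X.H} (hδ : ∀ k, δ k ∈ X.chainHull x₀ γ) :
    X.chainHull x₀ δ ⊆ X.chainHull x₀ γ := by
  rintro g ⟨k, k', hk, hk'⟩
  obtain ⟨i, -, hi, -⟩ := hδ k
  obtain ⟨-, i', -, hi'⟩ := hδ k'
  exact ⟨i, i', hi.trans hk, hk'.trans hi'⟩

lemma crosses_of_mem_chainHull {e : X.H} (hγ : ∀ k, X.Crosses (γ k) e) :
    ∀ g ∈ X.chainHull x₀ γ, X.Crosses g e := fun _ ⟨k, k', hk, hk'⟩ =>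
  crosses_of_awayHs_subset_of_subset hk hk' (hγ k) (hγ k')

lemma liesIn_chainHull (hγ : StrictAnti (X.awayHs x₀ ∘ γ)) :
    X.LiesIn (X.chainHull x₀ γ) (X.awayHs x₀ (γ 0)) :=
  fun _ ⟨_, k', _, hk'⟩ => ⟨_, hk'.trans (hγ.antitone (Nat.zero_le k'))⟩

lemma eventually_subset_awayHs (hγ : StrictAnti (X.awayHs x₀ ∘ γ)) {g : X.H}
    (hg : g ∈ X.chainHull x₀ γ) :
    ∀ᶠ l in Filter.atTop, X.awayHs x₀ (γ l) ⊆ X.awayHs x₀ g := by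
  obtain ⟨k, -, hk, -⟩ := hg
  exact Filter.eventually_atTop.2 ⟨k, fun l hl => (hγ.antitone hl).trans hk⟩

lemma inter_awayHs_nonempty_of_mem_chainHull (hγ : StrictAnti (X.awayHs x₀ ∘ γ))
    {g g' : X.H} (hg : g ∈ X.chainHull x₀ γ) (hg' : g' ∈ X.chainHull x₀ γ) :
    (X.awayHs x₀ g ∩ X.awayHs x₀ g').Nonempty := by
  obtain ⟨l, hl, hl'⟩ :=
    ((eventually_subset_awayHs hγ hg).and (eventually_subset_awayHs hγ hg')).exists
  exact (awayHs_nonempty x₀ (γ l)).mono (Set.subset_inter hl hl')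

lemma chainHull_inseparable (hγ : StrictAnti (X.awayHs x₀ ∘ γ)) :
    X.Inseparable (X.chainHull x₀ γ) := by
  rintro u hu u' hu' g ⟨β, hβu, hβu'⟩
  wlog hβ : β = X.side g x₀ generalizing u u' β
  · exact this u' hu' u hu (!β) hβu' (by rwa [Bool.not_not]) (Bool.not_eq.2 hβ)
  subst hβ
  have hu'g := awayHs_subset_of_inHalf_away_side hβu'
  have hgu := awayHs_subset_of_inHalf_base_side hβu
    ((inter_awayHs_nonempty_of_mem_chainHull hγ hu hu').mono
      (Set.inter_subset_inter_right _ hu'g))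
  obtain ⟨k, -, hk, -⟩ := hu'
  obtain ⟨-, k', -, hk'⟩ := hu
  exact ⟨k, k', hk.trans hu'g, hgu.trans hk'⟩

lemma isUBS_chainHull (hγ : StrictAnti (X.awayHs x₀ ∘ γ)) : X.IsUBS (X.chainHull x₀ γ) :=
  ⟨Set.infinite_of_injective_forall_mem (Function.Injective.of_comp hγ.injective)
      mem_chainHull_self,
    chainHull_inseparable hγ,
    unidirectional_of_inter_awayHs_nonempty fun _ hg _ hg' =>
      inter_awayHs_nonempty_of_mem_chainHull hγ hg hg',
    noFacingTriple_of_inter_awayHs_nonempty fun _ hg _ hg' =>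
      inter_awayHs_nonempty_of_mem_chainHull hγ hg hg'⟩

lemma crosses_of_not_subset_level (hγ : StrictAnti (X.awayHs x₀ ∘ γ)) {g : X.H}
    (hg : g ∈ X.chainHull x₀ γ) {M m : ℕ} (hMm : M ≤ m)
    (hM : ¬ X.awayHs x₀ g ⊆ X.awayHs x₀ (γ M)) (hm : ¬ X.awayHs x₀ (γ m) ⊆ X.awayHs x₀ g) :
    X.Crosses g (γ m) := by
  rw [crosses_iff_awayHs x₀]
  obtain ⟨l, hl, hml⟩ :=
    ((eventually_subset_awayHs hγ hg).and (Filter.eventually_ge_atTop m)).exists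
  exact ⟨(awayHs_nonempty x₀ (γ l)).mono (Set.subset_inter hl (hγ.antitone hml)),
    fun hs => hM (hs.trans (hγ.antitone hMm)), hm⟩

lemma exists_infinite_not_subset_level (hXc : X.NoInfiniteCrossing) {S : Set X.H}
    (hSU : S ⊆ X.chainHull x₀ γ) (hS : X.IsUBS S) (hdiff : (X.chainHull x₀ γ \ S).Infinite) :
    ∃ M, {g ∈ X.chainHull x₀ γ | ¬ X.awayHs x₀ g ⊆ X.awayHs x₀ (γ M)}.Infinite := by
  obtain ⟨δ, hδ, hδS⟩ := exists_strictAnti_subset hXc x₀ hS.1 hS.2.2.2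
  by_cases hdeep : ∀ M, ∃ k, X.awayHs x₀ (δ k) ⊆ X.awayHs x₀ (γ M)
  · -- every member of the hull of `γ` below `δ 0` is then pinched between terms of `δ`
    obtain ⟨J, -, hJ, -⟩ := hSU (hδS 0)
    refine ⟨J, hdiff.mono fun g hg => ⟨hg.1, fun hgJ => hg.2 ?_⟩⟩
    obtain ⟨i, -, hi, -⟩ := hg.1
    obtain ⟨k, hk⟩ := hdeep i
    exact chainHull_subset_of_inseparable hS.2.1 hδS ⟨k, 0, hk.trans hi, hgJ.trans hJ⟩
  · push Not at hdeep
    obtain ⟨M, hM⟩ := hdeep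
    exact ⟨M, Set.infinite_of_injective_forall_mem (Function.Injective.of_comp hδ.injective)
      fun k => ⟨hSU (hδS k), hM k⟩⟩

lemma exists_crossing_subUBS_of_not_minUBS (hXc : X.NoInfiniteCrossing)
    (hγ : StrictAnti (X.awayHs x₀ ∘ γ)) (hnot : ¬ X.MinUBS (X.chainHull x₀ γ)) :
    ∃ e ∈ X.chainHull x₀ γ, ∃ V ⊆ X.chainHull x₀ γ, X.IsUBS V ∧ ∀ g ∈ V, X.Crosses g e := by
  obtain ⟨S, hSU, hS, hne⟩ :
      ∃ S ⊆ X.chainHull x₀ γ, X.IsUBS S ∧ ¬ X.AlmostEq (X.chainHull x₀ γ) S := by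
    by_contra! h
    exact hnot ⟨isUBS_chainHull hγ, h⟩
  have hdiff : (X.chainHull x₀ γ \ S).Infinite := fun hfin =>
    hne (by rwa [AlmostEq, symmDiff_of_ge hSU])
  obtain ⟨M, hM⟩ := exists_infinite_not_subset_level hXc hSU hS hdiff
  -- all but finitely many of these also miss part of `awayHs x₀ (γ (M + 1))`, so cross `γ (M + 1)`
  have hE := hM.sdiff (finite_setOf_subset_awayHs x₀ (awayHs_nonempty x₀ (γ (M + 1))))
  obtain ⟨δ, hδ, hδE⟩ := exists_strictAnti_subset hXc x₀ hE
    ((isUBS_chainHull hγ).2.2.2.mono fun g hg => hg.1.1)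
  have hδU : ∀ k, δ k ∈ X.chainHull x₀ γ := fun k => (hδE k).1.1
  exact ⟨γ (M + 1), mem_chainHull_self _, X.chainHull x₀ δ, chainHull_subset_chainHull hδU,
    isUBS_chainHull hδ, crosses_of_mem_chainHull fun k =>
      crosses_of_not_subset_level hγ (hδU k) M.le_succ (hδE k).1.2 (hδE k).2⟩

end chainHull

lemma IsUBS.exists_crossing_subUBS (hXc : X.NoInfiniteCrossing) {U : Set X.H}
    (hU : X.IsUBS U) (hno : ∀ M ⊆ U, ¬ X.MinUBS M) :
    ∃ e ∈ U, ∃ V ⊆ U, X.IsUBS V ∧ ∀ g ∈ V, X.Crosses g e := by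
  obtain ⟨x₀⟩ := X.nonempty_V
  obtain ⟨γ, hγ, hγU⟩ := exists_strictAnti_subset hXc x₀ hU.1 hU.2.2.2
  have hsub := chainHull_subset_of_inseparable (x₀ := x₀) hU.2.1 hγU
  obtain ⟨e, he, V, hVsub, hV, hcross⟩ :=
    exists_crossing_subUBS_of_not_minUBS hXc hγ (hno _ hsub)
  exact ⟨e, hsub he, V, hVsub.trans hsub, hV, hcross⟩

lemma IsUBS.exists_minUBS_subset (hXc : X.NoInfiniteCrossing) {U : Set X.H} (hU : X.IsUBS U) :
    ∃ M ⊆ U, X.MinUBS M := by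
  by_contra! hno
  obtain ⟨e₀, -, V₀, hV₀U, hV₀, h₀⟩ := hU.exists_crossing_subUBS hXc hno
  -- iterating gives an infinite family of pairwise crossing hyperplanes
  obtain ⟨f, -, hf⟩ := exists_seq_of_forall_exists
    (P := fun p : X.H × Set X.H => X.IsUBS p.2 ∧ p.2 ⊆ U ∧ ∀ g ∈ p.2, X.Crosses g p.1)
    (r := fun p q => q.1 ∈ p.2 ∧ q.2 ⊆ p.2)
    (fun p ⟨hp, hpU, _⟩ => by
      obtain ⟨e, he, V, hVp, hV, hVe⟩ :=
        hp.exists_crossing_subUBS hXc fun M hM => hno M (hM.trans hpU)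
      exact ⟨(e, V), ⟨hV, hVp.trans hpU, hVe⟩, he, hVp⟩)
    (a := (e₀, V₀)) ⟨hV₀, hV₀U, h₀⟩
  have hanti : Antitone fun n => (f n).2 := antitone_nat_of_succ_le fun n => (hf n).2.2
  refine hXc.false_of_crosses_seq (e := fun n => (f n).1) fun m n hmn => ?_
  obtain ⟨k, rfl⟩ := Nat.exists_eq_add_of_lt hmn
  exact ((hf m).1.2.2 _ (hanti (Nat.le_add_right m k) (hf (m + k)).2.1)).symm

lemma IsUBS.exists_minUBS_liesIn (hXc : X.NoInfiniteCrossing) {U : Set X.H} (hU : X.IsUBS U) :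
    ∃ M ⊆ U, X.MinUBS M ∧ ∃ h b, X.LiesIn M (X.Hs h b) := by
  obtain ⟨x₀⟩ := X.nonempty_V
  obtain ⟨γ, hγ, hγU⟩ := exists_strictAnti_subset hXc x₀ hU.1 hU.2.2.2
  have hsub := chainHull_subset_of_inseparable (x₀ := x₀) hU.2.1 hγU
  obtain ⟨M, hM, hMmin⟩ := (isUBS_chainHull hγ).exists_minUBS_subset hXc
  exact ⟨M, hM.trans hsub, hMmin, _, _, (liesIn_chainHull hγ).mono hM subset_rfl⟩

lemma MinUBS.exists_liesIn (hXc : X.NoInfiniteCrossing) {U : Set X.H} (hU : X.MinUBS U) :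
    ∃ M, X.MinUBS M ∧ X.AlmostEq U M ∧ ∃ h b, X.LiesIn M (X.Hs h b) := by
  obtain ⟨M, hMU, hM, hMh⟩ := hU.1.exists_minUBS_liesIn hXc
  exact ⟨M, hM, hU.2 M hMU hM.1, hMh⟩

lemma exists_minUBS_liesIn (hXc : X.NoInfiniteCrossing) (hess : ∀ h : X.H, X.EssentialHyp h)
    (h : X.H) (b : Bool) : ∃ M, X.MinUBS M ∧ X.LiesIn M (X.Hs h b) := by
  obtain ⟨x₀, hx₀⟩ := Hs_nonempty h (!b)
  obtain ⟨γ, rfl, hγ⟩ := exists_strictAnti_of_essential hess x₀ h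
  obtain ⟨M, hM, hMmin⟩ := (isUBS_chainHull hγ).exists_minUBS_subset hXc
  have htop : X.awayHs x₀ (γ 0) = X.Hs (γ 0) b := by
    rw [awayHs, show X.side (γ 0) x₀ = !b from hx₀, Bool.not_not]
  exact ⟨M, hMmin, (liesIn_chainHull hγ).mono hM htop.subset⟩

lemma FaceOf.inter_infinite {M W : Set X.H} (hF : X.FaceOf M W) : (M ∩ W).Infinite := by
  obtain ⟨U, W', hU, -, hMU, hWW', hUW'⟩ := hF
  refine (hU.1.sdiff (hMU.union hWW')).mono fun g hg => ?_
  obtain ⟨hgU, hg⟩ := hg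
  simp only [Set.mem_union, Set.mem_symmDiff, not_or, not_and_or, not_not] at hg
  tauto

lemma IsUBS.false_of_liesIn_disjoint (hXc : X.NoInfiniteCrossing) {W M M' : Set X.H}
    {P P' : Set X.V} (hW : X.IsUBS W) (hM : X.LiesIn M P) (hM' : X.LiesIn M' P')
    (hPP' : Disjoint P P') (hP' : P'.Nonempty) (hMW : (M ∩ W).Infinite)
    (hM'W : (M' ∩ W).Infinite) : False := by
  obtain ⟨x₀, hx₀⟩ := hP'
  have haway : ∀ g ∈ M, X.awayHs x₀ g ⊆ P := fun g hg => by
    obtain ⟨c, hc⟩ := hM g hg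
    rwa [awayHs_eq_of_base_notMem fun h => hPP'.notMem_of_mem_right hx₀ (hc h)]
  -- the pivot `a` has infinitely many hyperplanes of `W` on each of its sides
  obtain ⟨a, ⟨haM, haW⟩, hbelow⟩ :=
    exists_mem_infinite_below hXc x₀ hMW (hW.2.2.2.mono Set.inter_subset_right)
  obtain ⟨b, hb⟩ := hW.2.2.1 a haW
  rcases Bool.eq_or_eq_not b (X.side a x₀) with rfl | rfl
  · refine absurd hb ((hM'W.sdiff (Set.finite_singleton a)).mono fun g hg => ⟨hg.1.2, ?_⟩)
    obtain ⟨⟨hgM', -⟩, hga⟩ := hg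
    obtain ⟨c, hc⟩ := hM' g hgM'
    refine inHalf_iff.2 ⟨hga, c, ?_⟩
    rw [← compl_awayHs]
    exact hc.trans (hPP'.subset_compl_left.trans (Set.compl_subset_compl.2 (haway a haM)))
  · exact absurd hb (hbelow.mono fun g hg => ⟨hg.1.2, inHalf_of_awayHs_ssubset hg.2⟩)

variable (X) in
def IsFactor (K : Set X.H) : Prop := ∀ a ∈ K, ∀ g ∉ K, X.Crosses a g

variable (X) in
def Unbounded (K : Set X.H) : Prop :=
  ∀ n : ℕ, ∃ x y : X.V, n ≤ ({h | X.side h x ≠ X.side h y} ∩ K).ncard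

lemma productDecomp_iff :
    X.ProductDecomp ↔ ∃ K, X.IsFactor K ∧ X.Unbounded K ∧ X.Unbounded Kᶜ := by
  constructor
  · rintro ⟨H₁, H₂, hdisj, hcov, hcross, hub₁, hub₂⟩
    obtain rfl : H₁ᶜ = H₂ := IsCompl.compl_eq ⟨hdisj, codisjoint_iff.2 hcov⟩
    exact ⟨H₁, hcross, hub₁, hub₂⟩
  · rintro ⟨K, hK, hub, hub'⟩
    exact ⟨K, Kᶜ, disjoint_compl_right, Set.union_compl_self K, hK, hub, hub'⟩

lemma Unbounded.nonempty {K : Set X.H} (hK : X.Unbounded K) : K.Nonempty := by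
  obtain ⟨x, y, hxy⟩ := hK 1
  obtain ⟨g, -, hg⟩ :=
    Set.nonempty_of_ncard_ne_zero (s := {h | X.side h x ≠ X.side h y} ∩ K) (by omega)
  exact ⟨g, hg⟩

namespace IsFactor

variable {K : Set X.H}

lemma compl (hK : X.IsFactor K) : X.IsFactor Kᶜ := fun a ha g hg =>
  (hK g (Set.notMem_compl_iff.1 hg) a ha).symm

lemma mem_of_Hs_subset (hK : X.IsFactor K) {h g : X.H} (hh : h ∈ K) {c b : Bool}
    (hsub : X.Hs g c ⊆ X.Hs h b) : g ∈ K := by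
  by_contra hg
  exact not_crosses_of_Hs_subset hsub (hK h hh g hg).symm

lemma subset_of_liesIn (hK : X.IsFactor K) {h : X.H} (hh : h ∈ K) {b : Bool} {M : Set X.H}
    (hM : X.LiesIn M (X.Hs h b)) : M ⊆ K := fun g hg =>
  let ⟨_, hc⟩ := hM g hg
  hK.mem_of_Hs_subset hh hc

lemma unbounded (hess : ∀ h : X.H, X.EssentialHyp h) (hK : X.IsFactor K) (hne : K.Nonempty) :
    X.Unbounded K := by
  obtain ⟨h, hh⟩ := hne
  obtain ⟨x₀⟩ := X.nonempty_V
  obtain ⟨γ, rfl, hγ⟩ := exists_strictAnti_of_essential hess x₀ h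
  intro n
  obtain ⟨x, hx⟩ := awayHs_nonempty x₀ (γ n)
  refine ⟨x, x₀, ?_⟩
  have hsub : γ '' (Finset.range n : Set ℕ) ⊆ {g | X.side g x ≠ X.side g x₀} ∩ K := by
    rintro _ ⟨k, hk, rfl⟩
    exact ⟨mem_awayHs.1 (hγ.antitone (Finset.mem_range.1 hk).le hx),
      hK.mem_of_Hs_subset hh (hγ.antitone (Nat.zero_le k))⟩
  calc n = (γ '' (Finset.range n : Set ℕ)).ncard := by
        rw [Set.ncard_image_of_injective _ (Function.Injective.of_comp hγ.injective),
          Set.ncard_coe_finset, Finset.card_range]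
    _ ≤ _ := Set.ncard_le_ncard hsub ((X.sep_finite x x₀).inter_of_left K)

end IsFactor

lemma IsUBS.inter_of_isFactor {K U : Set X.H} (hK : X.IsFactor K) (hU : X.IsUBS U)
    (hinf : (U ∩ K).Infinite) : X.IsUBS (U ∩ K) :=
  ⟨hinf, fun u hu u' hu' g hsep => ⟨hU.2.1 u hu.1 u' hu'.1 g hsep, by_contra fun hg =>
      let ⟨_, hug, _⟩ := hsep
      not_inHalf_of_crosses (hK u hu.2 g hg).symm hug⟩,
    hU.2.2.1.mono Set.inter_subset_left, hU.2.2.2.mono Set.inter_subset_left⟩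

lemma IsUBS.union {U V : Set X.H} (hU : X.IsUBS U) (hV : X.IsUBS V)
    (hUV : ∀ u ∈ U, ∀ v ∈ V, X.Crosses u v) : X.IsUBS (U ∪ V) := by
  refine ⟨hU.1.mono Set.subset_union_left, ?_, ?_, ?_⟩
  · rintro u (hu | hu) u' (hu' | hu') g hsep
    · exact Or.inl (hU.2.1 u hu u' hu' g hsep)
    · exact absurd hsep (not_sepH_of_crosses (hUV u hu u' hu'))
    · exact absurd hsep (not_sepH_of_crosses (hUV u' hu' u hu).symm)
    · exact Or.inr (hV.2.1 u hu u' hu' g hsep)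
  · rintro u (hu | hu)
    · obtain ⟨b, hb⟩ := hU.2.2.1 u hu
      exact ⟨b, hb.subset fun g ⟨hg, hin⟩ =>
        ⟨hg.resolve_right fun hgV => not_inHalf_of_crosses (hUV u hu g hgV) hin, hin⟩⟩
    · obtain ⟨b, hb⟩ := hV.2.2.1 u hu
      exact ⟨b, hb.subset fun g ⟨hg, hin⟩ =>
        ⟨hg.resolve_left fun hgU => not_inHalf_of_crosses (hUV g hgU u hu).symm hin, hin⟩⟩
  · rintro a ha b hb c hc hf
    obtain ⟨nab, nac, -⟩ := hf.not_crosses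
    rcases ha with ha | ha <;> rcases hb with hb | hb <;> rcases hc with hc | hc <;>
    first
    | exact hU.2.2.2 a ha b hb c hc hf
    | exact hV.2.2.2 a ha b hb c hc hf
    | exact nab (hUV a ha b hb) | exact nab (hUV b hb a ha).symm
    | exact nac (hUV a ha c hc) | exact nac (hUV c hc a ha).symm

variable (X) in
def almostIn (K : Set X.H) : Set (Set X.H) := {U | X.MinUBS U ∧ (U \ K).Finite}

section almostIn

variable {K U V : Set X.H}

lemma almostEq_inter_of_mem_almostIn (hU : U ∈ X.almostIn K) : X.AlmostEq U (U ∩ K) := by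
  rw [AlmostEq, symmDiff_of_ge Set.inter_subset_left, Set.sdiff_self_inter]
  exact hU.2

lemma mem_almostIn_of_almostEq (hU : U ∈ X.almostIn K) (hV : X.MinUBS V)
    (hUV : X.AlmostEq U V) : V ∈ X.almostIn K := by
  refine ⟨hV, (hU.2.union hUV).subset fun g ⟨hgV, hgK⟩ => ?_⟩
  by_cases hgU : g ∈ U
  · exact Or.inl ⟨hgU, hgK⟩
  · exact Or.inr (Or.inr ⟨hgV, hgU⟩)

lemma not_almostEq_of_mem_almostIn (hU : U ∈ X.almostIn K) (hV : V ∈ X.almostIn Kᶜ) :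
    ¬ X.AlmostEq U V := fun hUV => by
  refine hU.1.1.1 (((hU.2.union hV.2).union hUV).subset fun g hgU => ?_)
  by_cases hgK : g ∈ K
  · by_cases hgV : g ∈ V
    · exact Or.inl (Or.inr ⟨hgV, not_not.2 hgK⟩)
    · exact Or.inr (Or.inl ⟨hgU, hgV⟩)
  · exact Or.inl (Or.inl ⟨hgU, hgK⟩)

lemma IsFactor.isUBS_inter_of_mem_almostIn (hK : X.IsFactor K) (hU : U ∈ X.almostIn K) :
    X.IsUBS (U ∩ K) :=
  hU.1.1.inter_of_isFactor hK fun hfin =>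
    hU.1.1.1 (Set.inter_union_sdiff U K ▸ hfin.union hU.2)

lemma IsFactor.almostIn_nonempty (hXc : X.NoInfiniteCrossing)
    (hess : ∀ h : X.H, X.EssentialHyp h) (hK : X.IsFactor K) (hne : K.Nonempty) :
    (X.almostIn K).Nonempty := by
  obtain ⟨h, hh⟩ := hne
  obtain ⟨M, hM, hMh⟩ := exists_minUBS_liesIn hXc hess h true
  exact ⟨M, hM, by rw [Set.sdiff_eq_empty.2 (hK.subset_of_liesIn hh hMh)]; exact Set.finite_empty⟩

lemma IsFactor.mem_almostIn_or (hK : X.IsFactor K) (hU : X.MinUBS U) :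
    U ∈ X.almostIn K ∨ U ∈ X.almostIn Kᶜ := by
  by_cases hfin : (U \ K).Finite
  · exact Or.inl ⟨hU, hfin⟩
  · have hUBS := hU.1.inter_of_isFactor hK.compl (by rwa [← Set.sdiff_eq])
    have hUK := hU.2 _ Set.inter_subset_left hUBS
    rw [AlmostEq, symmDiff_of_ge Set.inter_subset_left, Set.sdiff_self_inter] at hUK
    exact Or.inr ⟨hU, hUK⟩

lemma IsFactor.exists_span (hK : X.IsFactor K) (hU : U ∈ X.almostIn K)
    (hV : V ∈ X.almostIn Kᶜ) : ∃ W, X.IsUBS W ∧ X.FaceOf U W ∧ X.FaceOf V W := by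
  have hU' := hK.isUBS_inter_of_mem_almostIn hU
  have hV' := hK.compl.isUBS_inter_of_mem_almostIn hV
  have hW := hU'.union hV' fun u hu v hv => hK u hu.2 v hv.2
  have hWW : X.AlmostEq (U ∩ K ∪ V ∩ Kᶜ) (U ∩ K ∪ V ∩ Kᶜ) := by
    rw [AlmostEq, symmDiff_self]; exact Set.finite_empty
  exact ⟨_, hW, ⟨_, _, hU', hW, almostEq_inter_of_mem_almostIn hU, hWW, Set.subset_union_left⟩,
    ⟨_, _, hV', hW, almostEq_inter_of_mem_almostIn hV, hWW, Set.subset_union_right⟩⟩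

end almostIn

lemma IsFactor.joinDecomp (hXc : X.NoInfiniteCrossing) (hess : ∀ h : X.H, X.EssentialHyp h)
    {K : Set X.H} (hK : X.IsFactor K) (hne : K.Nonempty) (hne' : Kᶜ.Nonempty) :
    X.JoinDecomp :=
  ⟨X.almostIn K, X.almostIn Kᶜ, fun _ hU => hU.1, fun _ hU => hU.1,
    hK.almostIn_nonempty hXc hess hne, hK.compl.almostIn_nonempty hXc hess hne',
    fun _ _ hU => mem_almostIn_of_almostEq hU, fun _ _ hU => mem_almostIn_of_almostEq hU,
    fun _ hU => hK.mem_almostIn_or hU, fun _ hU _ hV => not_almostEq_of_mem_almostIn hU hV,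
    fun _ hU _ hV => hK.exists_span hU hV⟩

lemma JoinDecomp.exists_isFactor (hXc : X.NoInfiniteCrossing)
    (hess : ∀ h : X.H, X.EssentialHyp h) (hJ : X.JoinDecomp) :
    ∃ K, X.IsFactor K ∧ K.Nonempty ∧ Kᶜ.Nonempty := by
  obtain ⟨A₁, A₂, hA₁, hA₂, hne₁, hne₂, hcl₁, hcl₂, htot, -, hspan⟩ := hJ
  let Based : Set (Set X.H) → X.H → Prop := fun A h => ∃ M ∈ A, ∃ b, X.LiesIn M (X.Hs h b)
  have hsep : ∀ h b, ∀ M ∈ A₁, ∀ M' ∈ A₂,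
      X.LiesIn M (X.Hs h b) → X.LiesIn M' (X.Hs h (!b)) → False := by
    intro h b M hM M' hM' hMb hM'b
    obtain ⟨W, hW, hF, hF'⟩ := hspan M hM M' hM'
    exact hW.false_of_liesIn_disjoint hXc hMb hM'b (disjoint_Hs_not h b) (Hs_nonempty h !b)
      hF.inter_infinite hF'.inter_infinite
  -- if both witnesses lie on the same side of `h`, a minimal UBS on the other side rules one out
  have hcoh : ∀ h, Based A₁ h → ¬ Based A₂ h := by
    rintro h ⟨M, hM, b, hMb⟩ ⟨M', hM', b', hM'b⟩
    obtain ⟨N, hN, hNb⟩ := exists_minUBS_liesIn hXc hess h (!b)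
    rcases Bool.eq_or_eq_not b' b with rfl | rfl
    · rcases htot N hN with hN₁ | hN₂
      · exact hsep h (!b') N hN₁ M' hM' hNb (by rwa [Bool.not_not])
      · exact hsep h b' M hM N hN₂ hMb hNb
    · exact hsep h b M hM M' hM' hMb hM'b
  have hbased : ∀ A : Set (Set X.H), A.Nonempty → (∀ U ∈ A, X.MinUBS U) →
      (∀ U U', U ∈ A → X.MinUBS U' → X.AlmostEq U U' → U' ∈ A) → ∃ h, Based A h := by
    rintro A ⟨U, hU⟩ hA hcl
    obtain ⟨M, hM, hUM, h, b, hMb⟩ := (hA U hU).exists_liesIn hXc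
    exact ⟨h, M, hcl U M hU hM hUM, b, hMb⟩
  refine ⟨{h | Based A₁ h}, fun a ha g hg => by_contra fun hnc => ?_, hbased A₁ hne₁ hA₁ hcl₁,
    (hbased A₂ hne₂ hA₂ hcl₂).imp fun h hh h₁ => hcoh h h₁ hh⟩
  obtain ⟨c, c', hsub⟩ := exists_Hs_subset_of_not_crosses hnc
  obtain ⟨N, hN, hNc⟩ := exists_minUBS_liesIn hXc hess a c
  rcases htot N hN with hN₁ | hN₂
  · exact hg ⟨N, hN₁, c', hNc.mono subset_rfl hsub⟩
  · exact hcoh a ha ⟨N, hN₂, c, hNc⟩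

end CCC

/-- **Products and joins** (Theorem 4.25).  Let `X` be an essential CAT(0)
cube complex with no infinite family of pairwise-crossing hyperplanes.
(i) If `X` decomposes as a product of two unbounded convex subcomplexes then
`∂X` decomposes as a simplicial join of two disjoint nonempty subcomplexes;
(ii) if moreover `X` is fully visible, the converse holds. -/
theorem products_and_joins (X : CCC) (hX : X.NoInfiniteCrossing)
    (hess : ∀ h : X.H, X.EssentialHyp h) :
    (X.ProductDecomp → X.JoinDecomp) ∧
      (X.FullyVisible → X.JoinDecomp → X.ProductDecomp) := by
  refine ⟨fun hP => ?_, fun _ hJ => ?_⟩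
  · obtain ⟨K, hK, hub, hub'⟩ := CCC.productDecomp_iff.1 hP
    exact hK.joinDecomp hX hess hub.nonempty hub'.nonempty
  · obtain ⟨K, hK, hne, hne'⟩ := hJ.exists_isFactor hX hess
    exact CCC.productDecomp_iff.2 ⟨K, hK, hK.unbounded hess hne, hK.compl.unbounded hess hne'⟩
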